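/- arXiv:1911.11496 — 4 statements merged into one kernel-verified Lean document; each statement's English description precedes it below -/
import Mathlib

section
/- There is no affine map T : ℝ³ → ℝ³ such that for every attribute subset B ⊆ {1,2,3} of the formal context K0, T maps the binary encoding χ_B of B to the binary encoding χ_{B''} of the closure B'' of B. In particular, the set of affine linear mappings representing the closure operator on the attribute set of a formal context in binary encoding can be empty. -/
/-- Derivation of an attribute set: the objects having all attributes in `B`. -/
def extentDeriv {G M : Type*} (I : G → M → Prop) (B : Set M) : Set G :=
  {g | ∀ m ∈ B, I g m}
/-- Derivation of an object set: the attributes shared by all objects in `A`. -/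
def intentDeriv {G M : Type*} (I : G → M → Prop) (A : Set G) : Set M :=
  {m | ∀ g ∈ A, I g m}
/-- The closure `B''` of an attribute set. -/
def attrClosure {G M : Type*} (I : G → M → Prop) (B : Set M) : Set M :=
  intentDeriv I (extentDeriv I B)
/-- Binary encoding `χ_B ∈ {0,1}^n ⊆ ℝ^n` of a subset `B`. -/
noncomputable def enc {n : ℕ} (B : Set (Fin n)) : Fin n → ℝ :=
  B.indicator 1
/-- The formal context K0 with objects a=0, b=1, c=2, attributes 1=0, 2=1, 3=2
and incidence I = {(a,2),(a,3),(b,1),(b,3),(c,2)}. -/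
def K0 : Fin 3 → Fin 3 → Prop := fun g m =>
  (g, m) ∈ ({(0, 1), (0, 2), (1, 0), (1, 2), (2, 1)} : Set (Fin 3 × Fin 3))

lemma cEmpty : attrClosure K0 (∅ : Set (Fin 3)) = ∅ := by
  ext m; simp only [attrClosure, intentDeriv, extentDeriv, K0, Set.mem_setOf_eq,
    Set.mem_insert_iff, Set.mem_singleton_iff, Set.mem_empty_iff_false, Prod.mk.injEq]
  revert m; decide

lemma c0 : attrClosure K0 ({0} : Set (Fin 3)) = {0, 2} := by
  ext m; simp only [attrClosure, intentDeriv, extentDeriv, K0, Set.mem_setOf_eq,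
    Set.mem_insert_iff, Set.mem_singleton_iff, Prod.mk.injEq]
  revert m; decide

lemma c2 : attrClosure K0 ({2} : Set (Fin 3)) = {2} := by
  ext m; simp only [attrClosure, intentDeriv, extentDeriv, K0, Set.mem_setOf_eq,
    Set.mem_insert_iff, Set.mem_singleton_iff, Prod.mk.injEq]
  revert m; decide

lemma c02 : attrClosure K0 ({0, 2} : Set (Fin 3)) = {0, 2} := by
  ext m; simp only [attrClosure, intentDeriv, extentDeriv, K0, Set.mem_setOf_eq,
    Set.mem_insert_iff, Set.mem_singleton_iff, Prod.mk.injEq]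
  revert m; decide

lemma encEmpty : enc (∅ : Set (Fin 3)) = 0 := by
  funext i; simp [enc]

lemma enc02 : enc ({0, 2} : Set (Fin 3)) = enc {0} + enc {2} := by
  funext i; fin_cases i <;> simp [enc, Set.indicator]

lemma enc0_2 : enc ({0} : Set (Fin 3)) 2 = 0 := by simp [enc]
lemma enc2_2 : enc ({2} : Set (Fin 3)) 2 = 1 := by simp [enc]
lemma enc02_2 : enc ({0, 2} : Set (Fin 3)) 2 = 1 := by simp [enc]

/-- There is no affine map `T : ℝ³ → ℝ³` mapping the binary encoding of every
attribute set `B ⊆ {1,2,3}` of `K0` to the binary encoding of its closure `B''`. -/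
theorem no_affine_closure_representation :
    ¬ ∃ T : (Fin 3 → ℝ) →ᵃ[ℝ] (Fin 3 → ℝ),
      ∀ B : Set (Fin 3), T (enc B) = enc (attrClosure K0 B) := by
  rintro ⟨T, hT⟩
  have h0 : T 0 = 0 := by
    have := hT ∅; rwa [encEmpty, cEmpty, encEmpty] at this
  have hlin : ∀ x : Fin 3 → ℝ, T x = T.linear x := by
    intro x
    have := T.map_vadd 0 x
    simpa [h0] using this
  have hA := hT {0}
  have hB := hT {2}
  have hAB := hT {0, 2}
  rw [hlin, c0] at hA
  rw [hlin, c2] at hB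
  rw [hlin, c02, enc02, map_add, hA, hB] at hAB
  have := congrFun hAB 2
  simp only [Pi.add_apply, enc02_2, enc2_2, enc0_2] at this
  linarith
end

section
/- There is no affine map T : ℝ³ → ℝ³ such that for every attribute subset B ⊆ {1,2,3} of the formal context K0, T maps the binary encoding χ_B of B to the binary encoding χ_{B'} of the derivation B' of B. In particular, the set of affine linear mappings representing the derivation operator on the attribute set of a formal context in binary encoding can be empty. -/
/-- There is no affine map `T : ℝ³ → ℝ³` mapping the binary encoding of every
attribute set `B ⊆ {1,2,3}` of `K0` to the binary encoding (in `{0,1}³ ⊆ ℝ³`,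
indexed by the objects) of its derivation `B'`. -/
theorem no_affine_derivation_representation :
    ¬ ∃ T : (Fin 3 → ℝ) →ᵃ[ℝ] (Fin 3 → ℝ),
      ∀ B : Set (Fin 3), T (enc B) = enc (extentDeriv K0 B) := by
  rintro ⟨T, h⟩
  have key : enc ({0, 2} : Set (Fin 3)) =
      (enc ({0} : Set (Fin 3)) -ᵥ enc (∅ : Set (Fin 3))) +ᵥ enc ({2} : Set (Fin 3)) := by
    funext i
    fin_cases i <;>
      simp [enc, Set.indicator_apply]
  have h02 := h {0, 2}
  rw [key, AffineMap.map_vadd, AffineMap.linearMap_vsub, h {0}, h (∅ : Set (Fin 3)),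
    h {2}] at h02
  have := congrFun h02 2
  simp only [Pi.vadd_apply', vsub_eq_sub, vadd_eq_add, Pi.add_apply, Pi.sub_apply] at this
  rw [show ((enc (extentDeriv K0 {0, 2})) 2 : ℝ) = 0 by
        simp [enc, extentDeriv, K0, Set.indicator_apply],
      show ((enc (extentDeriv K0 {0})) 2 : ℝ) = 0 by
        simp [enc, extentDeriv, K0, Set.indicator_apply],
      show ((enc (extentDeriv K0 (∅ : Set (Fin 3)))) 2 : ℝ) = 1 by
        simp [enc, extentDeriv, Set.indicator_apply],
      show ((enc (extentDeriv K0 {2})) 2 : ℝ) = 0 by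
        simp [enc, extentDeriv, K0, Set.indicator_apply]] at this
  norm_num at this
end

section
/- Let (G,M,I) be a finite formal context with G = {g_1,…,g_p} and M = {m_1,…,m_q}. Define the matrix W ∈ ℝ^{p×q} by W_{jh} = 0 if (g_j,m_h) ∈ I and W_{jh} = −1 otherwise, and let t : ℝ^p → ℝ^p apply componentwise the activation t̃ with t̃(0) = 1 and t̃(x) = 0 for x < 0. Then for every attribute set B ⊆ M, the vector t(W·χ_B) equals the binary encoding χ_{B'} of the derivation B' ⊆ G; that is, the j-th component of t(W·χ_B) is 1 if and only if g_j ∈ B'. -/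
open Classical in
/-- The matrix `W ∈ ℝ^{p×q}` with `W_{jh} = 0` if `(g_j, m_h) ∈ I` and
`W_{jh} = -1` otherwise. -/
noncomputable def Wmat {p q : ℕ} (I : Fin p → Fin q → Prop) :
    Matrix (Fin p) (Fin q) ℝ :=
  fun j h => if I j h then 0 else -1

/-- For any componentwise activation `t̃` with `t̃(0) = 1` and `t̃(x) = 0` for
`x < 0`, the vector `t(W · χ_B)` equals the binary encoding `χ_{B'}` of the
derivation `B' ⊆ G` of any attribute set `B ⊆ M`. -/
theorem firstLayer_computes_derivation {p q : ℕ} (I : Fin p → Fin q → Prop)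
    (t : ℝ → ℝ) (ht0 : t 0 = 1) (htneg : ∀ x : ℝ, x < 0 → t x = 0)
    (B : Set (Fin q)) :
    (fun j => t ((Wmat I).mulVec (enc B) j)) = enc (extentDeriv I B) := by
  classical
  funext j
  have hterm : ∀ h : Fin q, Wmat I j h * enc B h ≤ 0 := by
    intro h
    unfold Wmat enc
    by_cases hI : I j h <;> simp [hI]
    exact Set.indicator_apply_nonneg (fun _ => zero_le_one)
  have hsum : (Wmat I).mulVec (enc B) j =
      ∑ h, Wmat I j h * enc B h := rfl
  by_cases hj : j ∈ extentDeriv I B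
  · have hzero : ∀ h : Fin q, Wmat I j h * enc B h = 0 := by
      intro h
      by_cases hB : h ∈ B
      · have hI : I j h := hj h hB
        simp [Wmat, hI]
      · simp [enc, Set.indicator_of_notMem hB]
    rw [hsum]
    simp only [hzero, Finset.sum_const_zero, ht0]
    simp [enc, Set.indicator_of_mem hj]
  · obtain ⟨m, hmB, hIm⟩ : ∃ m ∈ B, ¬ I j m := by
      by_contra hcon
      push_neg at hcon
      exact hj hcon
    have hneg : Wmat I j m * enc B m < 0 := by
      simp [Wmat, hIm, enc, Set.indicator_of_mem hmB]
    have : (Wmat I).mulVec (enc B) j < 0 := by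
      rw [hsum]
      have hsplit : ∑ h, Wmat I j h * enc B h =
          (∑ h ∈ Finset.univ.erase m, Wmat I j h * enc B h) + Wmat I j m * enc B m :=
        (Finset.sum_erase_add _ _ (Finset.mem_univ m)).symm
      rw [hsplit]
      have h1 : (∑ h ∈ Finset.univ.erase m, Wmat I j h * enc B h) ≤ 0 :=
        Finset.sum_nonpos (fun h _ => hterm h)
      linarith
    rw [htneg _ this]
    simp [enc, Set.indicator_of_notMem hj]
end

section
/- Let (G,M,I) be a finite formal context with G = {g_1,…,g_p} and M = {m_1,…,m_q}. Define W ∈ ℝ^{p×q} by W_{jh} = 0 if (g_j,m_h) ∈ I and W_{jh} = −1 otherwise, let Ŵ = Wᵀ ∈ ℝ^{q×p}, and let t : ℝ^p → ℝ^p and t̂ : ℝ^q → ℝ^q apply componentwise the activation t̃ with t̃(0) = 1 and t̃(x) = 0 for x < 0. Then the composed network function maps every binary-encoded attribute set to its closure: for every B ⊆ M, t̂(Ŵ · t(W · χ_B)) = χ_{B''}. -/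
open Classical in
lemma key_step {n : ℕ} (t : ℝ → ℝ) (ht0 : t 0 = 1)
    (htneg : ∀ x : ℝ, x < 0 → t x = 0)
    (w : Fin n → ℝ) (hw : ∀ h, w h = 0 ∨ w h = -1) (A : Set (Fin n)) :
    t (∑ h, w h * enc A h) = if ∀ h ∈ A, w h = 0 then 1 else 0 := by
  have hnonpos : ∀ h, w h * enc A h ≤ 0 := by
    intro h
    apply mul_nonpos_of_nonpos_of_nonneg
    · rcases hw h with h0 | h0 <;> simp [h0]
    · exact Set.indicator_nonneg (fun _ _ => zero_le_one) h
  by_cases hc : ∀ h ∈ A, w h = 0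
  · have hsum : ∑ h, w h * enc A h = 0 := by
      apply Finset.sum_eq_zero
      intro h _
      by_cases hA : h ∈ A
      · simp [hc h hA]
      · simp [enc, Set.indicator_of_notMem hA]
    rw [hsum, ht0, if_pos hc]
  · push_neg at hc
    obtain ⟨h₀, hA, hw0⟩ := hc
    have hw0' : w h₀ = -1 := (hw h₀).resolve_left hw0
    have henc : enc A h₀ = 1 := by simp [enc, Set.indicator_of_mem hA]
    have hle : -(w h₀ * enc A h₀) ≤ ∑ h, -(w h * enc A h) :=
      Finset.single_le_sum (fun i _ => neg_nonneg.mpr (hnonpos i))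
        (Finset.mem_univ h₀)
    rw [Finset.sum_neg_distrib] at hle
    have : ∑ h, w h * enc A h ≤ -1 := by
      have := neg_le_neg hle
      simpa [hw0', henc] using this
    rw [htneg _ (lt_of_le_of_lt this (by norm_num))]
    rw [if_neg (by push_neg; exact ⟨h₀, hA, hw0⟩)]

open Classical in
/-- With `Ŵ = Wᵀ` and componentwise activation `t̃` satisfying `t̃(0) = 1` and
`t̃(x) = 0` for `x < 0`, the composed network function maps every binary-encoded
attribute set to its closure: `t̂(Ŵ · t(W · χ_B)) = χ_{B''}`. -/

theorem network_computes_closure {p q : ℕ} (I : Fin p → Fin q → Prop)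
    (t : ℝ → ℝ) (ht0 : t 0 = 1) (htneg : ∀ x : ℝ, x < 0 → t x = 0)
    (B : Set (Fin q)) :
    (fun h => t ((Wmat I).transpose.mulVec
        (fun j => t ((Wmat I).mulVec (enc B) j)) h))
      = enc (attrClosure I B) := by
  have hWzero : ∀ j h, Wmat I j h = 0 ↔ I j h := by
    intro j h
    unfold Wmat
    by_cases hI : I j h <;> simp [hI]
  have hWcases : ∀ j h, Wmat I j h = 0 ∨ Wmat I j h = -1 := by
    intro j h
    unfold Wmat
    by_cases hI : I j h <;> simp [hI]
  have inner_eq : (fun j => t ((Wmat I).mulVec (enc B) j))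
      = enc (extentDeriv I B) := by
    funext j
    rw [show (Wmat I).mulVec (enc B) j = ∑ h, Wmat I j h * enc B h from rfl]
    rw [key_step t ht0 htneg _ (fun h => hWcases j h) B]
    have : (∀ h ∈ B, Wmat I j h = 0) ↔ j ∈ extentDeriv I B := by
      simp only [extentDeriv, Set.mem_setOf_eq]
      constructor
      · intro hh m hm; exact (hWzero j m).mp (hh m hm)
      · intro hh m hm; exact (hWzero j m).mpr (hh m hm)
    by_cases hj : j ∈ extentDeriv I B
    · rw [if_pos (this.mpr hj)]
      simp [enc, Set.indicator_of_mem hj]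
    · rw [if_neg (fun hc => hj (this.mp hc))]
      simp [enc, Set.indicator_of_notMem hj]
  rw [inner_eq]
  funext h
  rw [show (Wmat I).transpose.mulVec (enc (extentDeriv I B)) h
      = ∑ j, Wmat I j h * enc (extentDeriv I B) j from rfl]
  rw [key_step t ht0 htneg _ (fun j => hWcases j h) (extentDeriv I B)]
  have : (∀ j ∈ extentDeriv I B, Wmat I j h = 0) ↔ h ∈ attrClosure I B := by
    simp only [attrClosure, intentDeriv, Set.mem_setOf_eq]
    constructor
    · intro hh g hg; exact (hWzero g h).mp (hh g hg)
    · intro hh g hg; exact (hWzero g h).mpr (hh g hg)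
  by_cases hc : h ∈ attrClosure I B
  · rw [if_pos (this.mpr hc)]
    simp [enc, Set.indicator_of_mem hc]
  · rw [if_neg (fun hx => hc (this.mp hx))]
    simp [enc, Set.indicator_of_notMem hc]
end
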